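/- Let ψ(θ,ρ) = -c_V θ(ln(θ/θ̂) - 1) + c_V θ(γ-1) ln(ρ/ρ̂) - c_V θ̂ with constants c_V > 0, γ > 1, θ̂ > 0, ρ̂ > 0, and set η = -∂ψ/∂θ, e = ψ + θη, p̂ = c_V(γ-1)θ̂ρ̂. Then for all θ, ρ > 0: ρ[(e(θ,ρ) - θ̂ η(θ,ρ)) - (e(θ̂,ρ̂) - θ̂ η(θ̂,ρ̂))] - (p̂/ρ̂)(ρ - ρ̂) = ρ c_V θ̂ [θ/θ̂ - 1 - ln(θ/θ̂)] + c_V(γ-1)θ̂ ρ̂ [(ρ/ρ̂) ln(ρ/ρ̂) - ρ/ρ̂ + 1]. -/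

import Mathlib

/-!
Differentiating `ψ` in `θ` gives the entropy `η = c_V ln(θ/θ̂) - c_V (γ-1) ln(ρ/ρ̂)`, so the internal
energy is `e = c_V (θ - θ̂)`, independent of `ρ`. Both sides of the identity are then explicit
expressions in `θ/θ̂`, `ρ/ρ̂` and their logarithms, and the terms `±ρ c_V θ̂ (γ-1) ln(ρ/ρ̂)`
produced by `e - θ̂ η` recombine with the pressure term into the density part.
-/

open Real

noncomputable def idealGasFreeEnergy (cV γ θhat ρhat θ ρ : ℝ) : ℝ :=
  -(cV * θ * (log (θ / θhat) - 1)) + cV * θ * (γ - 1) * log (ρ / ρhat) - cV * θhat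

lemma hasDerivAt_mul_log_div_sub_one {a θ : ℝ} (ha : a ≠ 0) (hθ : θ ≠ 0) :
    HasDerivAt (fun t => t * (log (t / a) - 1)) (log (θ / a)) θ := by
  have hlog : HasDerivAt (fun t => log (t / a) - 1) θ⁻¹ θ :=
    ((((hasDerivAt_id' θ).div_const a).log (div_ne_zero hθ ha)).sub_const 1).congr_deriv
      (by field_simp)
  exact ((hasDerivAt_id' θ).mul hlog).congr_deriv (by field_simp; ring)

lemma hasDerivAt_idealGasFreeEnergy (cV γ ρhat ρ : ℝ) {θhat θ : ℝ} (hθhat : θhat ≠ 0)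
    (hθ : θ ≠ 0) :
    HasDerivAt (fun t => idealGasFreeEnergy cV γ θhat ρhat t ρ)
      (-(cV * log (θ / θhat) - cV * (γ - 1) * log (ρ / ρhat))) θ := by
  have h := (((hasDerivAt_mul_log_div_sub_one hθhat hθ).const_mul cV).neg.add
    ((hasDerivAt_id θ).mul_const (cV * (γ - 1) * log (ρ / ρhat)))).sub_const (cV * θhat)
  refine (h.congr_deriv (by ring)).congr_of_eventuallyEq (.of_forall fun t => ?_)
  simp only [idealGasFreeEnergy, Pi.add_apply, Pi.neg_apply, id]
  ring

theorem stmt_12_general (cV γ θhat ρhat : ℝ)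
    (hθhat : 0 < θhat) (hρhat : 0 < ρhat)
    (ψ : ℝ → ℝ → ℝ)
    (hψ : ∀ θ ρ, ψ θ ρ =
      -(cV * θ * (Real.log (θ / θhat) - 1)) +
        cV * θ * (γ - 1) * Real.log (ρ / ρhat) - cV * θhat)
    -- entropy η = -∂ψ/∂θ
    (η : ℝ → ℝ → ℝ)
    (hη : ∀ θ ρ, 0 < θ → 0 < ρ → HasDerivAt (fun t => ψ t ρ) (-(η θ ρ)) θ)
    -- internal energy e = ψ + θ η
    (e : ℝ → ℝ → ℝ) (he : ∀ θ ρ, e θ ρ = ψ θ ρ + θ * η θ ρ)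
    (phat : ℝ) (hphat : phat = cV * (γ - 1) * θhat * ρhat) :
    ∀ θ ρ : ℝ, 0 < θ → 0 < ρ →
      ρ * ((e θ ρ - θhat * η θ ρ) - (e θhat ρhat - θhat * η θhat ρhat)) -
          phat / ρhat * (ρ - ρhat) =
        ρ * cV * θhat * (θ / θhat - 1 - Real.log (θ / θhat)) +
          cV * (γ - 1) * θhat * ρhat *
            ((ρ / ρhat) * Real.log (ρ / ρhat) - ρ / ρhat + 1) := by
  have hψ_eq : ψ = idealGasFreeEnergy cV γ θhat ρhat := funext₂ hψ
  subst hψ_eq hphat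
  have entropy : ∀ θ ρ, 0 < θ → 0 < ρ →
      η θ ρ = cV * log (θ / θhat) - cV * (γ - 1) * log (ρ / ρhat) := fun θ ρ hθ hρ =>
    neg_injective <|
      (hη θ ρ hθ hρ).unique (hasDerivAt_idealGasFreeEnergy cV γ ρhat ρ hθhat.ne' hθ.ne')
  have energy : ∀ θ ρ, 0 < θ → 0 < ρ → e θ ρ = cV * (θ - θhat) := fun θ ρ hθ hρ => by
    rw [he, entropy θ ρ hθ hρ, idealGasFreeEnergy]
    ring
  intro θ ρ hθ hρ
  rw [energy θ ρ hθ hρ, energy θhat ρhat hθhat hρhat, entropy θ ρ hθ hρ,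
    entropy θhat ρhat hθhat hρhat, div_self hθhat.ne', div_self hρhat.ne', log_one]
  field_simp
  ring

theorem stmt_12 (cV γ θhat ρhat : ℝ)
    (hcV : 0 < cV) (hγ : 1 < γ) (hθhat : 0 < θhat) (hρhat : 0 < ρhat)
    (ψ : ℝ → ℝ → ℝ)
    (hψ : ∀ θ ρ, ψ θ ρ =
      -(cV * θ * (Real.log (θ / θhat) - 1)) +
        cV * θ * (γ - 1) * Real.log (ρ / ρhat) - cV * θhat)
    -- entropy η = -∂ψ/∂θ
    (η : ℝ → ℝ → ℝ)
    (hη : ∀ θ ρ, 0 < θ → 0 < ρ → HasDerivAt (fun t => ψ t ρ) (-(η θ ρ)) θ)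
    -- internal energy e = ψ + θ η
    (e : ℝ → ℝ → ℝ) (he : ∀ θ ρ, e θ ρ = ψ θ ρ + θ * η θ ρ)
    (phat : ℝ) (hphat : phat = cV * (γ - 1) * θhat * ρhat) :
    ∀ θ ρ : ℝ, 0 < θ → 0 < ρ →
      ρ * ((e θ ρ - θhat * η θ ρ) - (e θhat ρhat - θhat * η θhat ρhat)) -
          phat / ρhat * (ρ - ρhat) =
        ρ * cV * θhat * (θ / θhat - 1 - Real.log (θ / θhat)) +
          cV * (γ - 1) * θhat * ρhat *
            ((ρ / ρhat) * Real.log (ρ / ρhat) - ρ / ρhat + 1) :=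
  stmt_12_general cV γ θhat ρhat hθhat hρhat ψ hψ η hη e he phat hphat
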